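/- arXiv:2203.04532 — 4 statements merged into one kernel-verified Lean document; each statement's English description precedes it below -/
import Mathlib

section
/- If u_h : [0, ∞) → ℝ^{M²} is a differentiable function with values in grid functions satisfying du_h/dt = ε² Δ_h u_h + f(u_h) (with f applied entrywise) for all t > 0, then the function t ↦ E_h(u_h(t)) is non-increasing on [0, ∞). -/
open scoped BigOperators
noncomputable section

/-- Grid functions on the `M × M` periodic mesh, identified with vectors in `ℝ^{M²}`.
The sup norm of this Pi type is the discrete `L^∞` (maximum) norm. -/
abbrev GridFun (M : ℕ) : Type := Fin M × Fin M → ℝ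

/-- Discrete inner product `⟨v,w⟩ = h² Σ_{i,j} v_{ij} w_{ij}`. -/
def gridInner (M : ℕ) (h : ℝ) (v w : GridFun M) : ℝ :=
  h ^ 2 * ∑ p : Fin M × Fin M, v p * w p

/-- Discrete `L²` norm `‖v‖ = ⟨v,v⟩^{1/2}`. -/
def gridNorm (M : ℕ) (h : ℝ) (v : GridFun M) : ℝ :=
  Real.sqrt (gridInner M h v v)

/-- The discrete Laplacian as a linear map (periodic indexing via `Fin M` arithmetic). -/
def dLapL (M : ℕ) [NeZero M] (h : ℝ) : GridFun M →ₗ[ℝ] GridFun M where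
  toFun v := fun p =>
    (v (p.1 + 1, p.2) + v (p.1 - 1, p.2) + v (p.1, p.2 + 1) + v (p.1, p.2 - 1) - 4 * v p) / h ^ 2
  map_add' v w := by funext p; simp only [Pi.add_apply]; ring
  map_smul' c v := by funext p; simp only [Pi.smul_apply, smul_eq_mul, RingHom.id_apply]; ring

/-- The discrete Laplacian `Δ_h` as a continuous linear map on `ℝ^{M²}`. -/
def dLap (M : ℕ) [NeZero M] (h : ℝ) : GridFun M →L[ℝ] GridFun M :=
  LinearMap.toContinuousLinearMap (dLapL M h)

/-- Bulk energy `E_{1h}(v) = h² Σ F(v_{ij})`. -/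
def E1h (M : ℕ) (h : ℝ) (F : ℝ → ℝ) (v : GridFun M) : ℝ :=
  h ^ 2 * ∑ p : Fin M × Fin M, F (v p)

/-- Discrete gradient energy `(ε²/2) ‖∇_h v‖²`. -/
def gradE (M : ℕ) [NeZero M] (h ε : ℝ) (v : GridFun M) : ℝ :=
  ε ^ 2 / 2 * (h ^ 2 * ∑ p : Fin M × Fin M,
    (((v (p.1 + 1, p.2) - v p) / h) ^ 2 + ((v (p.1, p.2 + 1) - v p) / h) ^ 2))

/-- Modified energy `𝓔_h(v, r) = (ε²/2)‖∇_h v‖² + r`. -/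
def modE (M : ℕ) [NeZero M] (h ε : ℝ) (v : GridFun M) (r : ℝ) : ℝ :=
  gradE M h ε v + r

/-- Discrete energy `E_h(v) = (ε²/2)‖∇_h v‖² + E_{1h}(v)`. -/
def Eh (M : ℕ) [NeZero M] (h ε : ℝ) (F : ℝ → ℝ) (v : GridFun M) : ℝ :=
  gradE M h ε v + E1h M h F v

/-- `g(v, r) = σ(r) / σ(E_{1h}(v))`. -/
def gFun (M : ℕ) (h : ℝ) (F σ : ℝ → ℝ) (v : GridFun M) (r : ℝ) : ℝ :=
  σ r / σ (E1h M h F v)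

/-- The linear operator `L_κ = κ g₀ I − ε² Δ_h`. -/
def Lkappa (M : ℕ) [NeZero M] (h ε κ g0 : ℝ) : GridFun M →L[ℝ] GridFun M :=
  (κ * g0) • (1 : GridFun M →L[ℝ] GridFun M) - ε ^ 2 • dLap M h

/-- The nonlinear operator `N_κ(v, r) = g(v,r) f(v) + κ g₀ v` (with `f` applied entrywise). -/
def Nkappa (M : ℕ) (h κ g0 : ℝ) (f F σ : ℝ → ℝ) (v : GridFun M) (r : ℝ) : GridFun M :=
  fun p => gFun M h F σ v r * f (v p) + κ * g0 * v p

/-- One step of the GSAV-EI1 scheme. -/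
def EI1step (M : ℕ) [NeZero M] (h ε κ τ : ℝ) (f F σ : ℝ → ℝ) (us : GridFun M × ℝ) :
    GridFun M × ℝ :=
  let g0 := gFun M h F σ us.1 us.2
  let Lk := Lkappa M h ε κ g0
  let u1 := (NormedSpace.exp (-(τ • Lk))) us.1
    + (∫ θ in (0:ℝ)..τ, NormedSpace.exp (-((τ - θ) • Lk))) (Nkappa M h κ g0 f F σ us.1 us.2)
  (u1, us.2 - g0 * gridInner M h (fun p => f (us.1 p)) (u1 - us.1))

/-- The GSAV-EI1 iterates `(uⁿ, sⁿ)`. -/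
def EI1 (M : ℕ) [NeZero M] (h ε κ τ : ℝ) (f F σ : ℝ → ℝ) (uinit : GridFun M) :
    ℕ → GridFun M × ℝ
  | 0 => (uinit, E1h M h F uinit)
  | n + 1 => EI1step M h ε κ τ f F σ (EI1 M h ε κ τ f F σ uinit n)

/-- The midpoint values `(ũ^{n+1/2}, s̃^{n+1/2})` of the GSAV-EI2 scheme, as a function of
`(uⁿ, sⁿ)`; the prediction `(ũ^{n+1}, s̃^{n+1})` is a GSAV-EI1 step. -/
def EI2half (M : ℕ) [NeZero M] (h ε κ τ : ℝ) (f F σ : ℝ → ℝ) (us : GridFun M × ℝ) :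
    GridFun M × ℝ :=
  let t := EI1step M h ε κ τ f F σ us
  ((1 / 2 : ℝ) • (us.1 + t.1), (us.2 + t.2) / 2)

/-- One step of the GSAV-EI2 scheme. -/
def EI2step (M : ℕ) [NeZero M] (h ε κ τ : ℝ) (f F σ : ℝ → ℝ) (us : GridFun M × ℝ) :
    GridFun M × ℝ :=
  let t := EI1step M h ε κ τ f F σ us
  let m := EI2half M h ε κ τ f F σ us
  let gh := gFun M h F σ m.1 m.2
  let Lk := Lkappa M h ε κ gh
  let u1 := (NormedSpace.exp (-(τ • Lk))) us.1
    + (∫ θ in (0:ℝ)..τ, NormedSpace.exp (-((τ - θ) • Lk))) (Nkappa M h κ gh f F σ m.1 m.2)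
  (u1, us.2 - gh * gridInner M h (fun p => f (m.1 p)) (u1 - us.1)
        + κ / 2 * gh * gridInner M h (u1 - t.1) (u1 - us.1))

/-- The GSAV-EI2 iterates `(uⁿ, sⁿ)`. -/
def EI2 (M : ℕ) [NeZero M] (h ε κ τ : ℝ) (f F σ : ℝ → ℝ) (uinit : GridFun M) :
    ℕ → GridFun M × ℝ
  | 0 => (uinit, E1h M h F uinit)
  | n + 1 => EI2step M h ε κ τ f F σ (EI2 M h ε κ τ f F σ uinit n)

/-- One step of the stabilized generalized-SAV scheme (GSAV-EI1 with `e^{−τL}` replaced by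
`(I + τL)^{−1}`). -/
def SAV1step (M : ℕ) [NeZero M] (h ε κ τ : ℝ) (f F σ : ℝ → ℝ) (us : GridFun M × ℝ) :
    GridFun M × ℝ :=
  let g0 := gFun M h F σ us.1 us.2
  let Lk := Lkappa M h ε κ g0
  let u1 := (Ring.inverse ((1 : GridFun M →L[ℝ] GridFun M) + τ • Lk))
      (us.1 + τ • Nkappa M h κ g0 f F σ us.1 us.2)
  (u1, us.2 - g0 * gridInner M h (fun p => f (us.1 p)) (u1 - us.1))

/-- The stabilized generalized-SAV iterates `(uⁿ, sⁿ)`. -/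
def SAV1 (M : ℕ) [NeZero M] (h ε κ τ : ℝ) (f F σ : ℝ → ℝ) (uinit : GridFun M) :
    ℕ → GridFun M × ℝ
  | 0 => (uinit, E1h M h F uinit)
  | n + 1 => SAV1step M h ε κ τ f F σ (SAV1 M h ε κ τ f F σ uinit n)


/-! The energy decays along the flow because, by summation by parts on the periodic grid, its
time derivative is `-⟨ε² Δ_h u + f(u), u'⟩ = -‖u'‖² ≤ 0`. -/

namespace GridFun

variable {M : ℕ}

lemma gridInner_self_nonneg (h : ℝ) (v : GridFun M) : 0 ≤ gridInner M h v v :=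
  mul_nonneg (sq_nonneg h) (Finset.sum_nonneg fun p _ => mul_self_nonneg (v p))

lemma hasDerivAt_E1h (h : ℝ) {f F : ℝ → ℝ} (hF : ∀ x, HasDerivAt F (-f x) x)
    {u : ℝ → GridFun M} {w : GridFun M} {t : ℝ} (hu : HasDerivAt u w t) :
    HasDerivAt (fun s => E1h M h F (u s)) (-gridInner M h (fun p => f (u t p)) w) t := by
  have hsum := (HasDerivAt.fun_sum (u := Finset.univ) fun p _ =>
    (hF (u t p)).comp t (hasDerivAt_pi.mp hu p)).const_mul (h ^ 2)
  refine hsum.congr_deriv ?_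
  simp only [gridInner, neg_mul, Finset.sum_neg_distrib, mul_neg]

variable [NeZero M]

lemma sum_comp_add_one_fst (g : GridFun M) :
    ∑ p : Fin M × Fin M, g (p.1 + 1, p.2) = ∑ p, g p :=
  Fintype.sum_equiv ((Equiv.addRight 1).prodCongr (Equiv.refl _)) _ _ fun _ => rfl

lemma sum_comp_add_one_snd (g : GridFun M) :
    ∑ p : Fin M × Fin M, g (p.1, p.2 + 1) = ∑ p, g p :=
  Fintype.sum_equiv ((Equiv.refl _).prodCongr (Equiv.addRight 1)) _ _ fun _ => rfl

lemma sum_diff_mul_diff (v w : GridFun M) :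
    ∑ p : Fin M × Fin M,
      ((v (p.1 + 1, p.2) - v p) * (w (p.1 + 1, p.2) - w p)
        + (v (p.1, p.2 + 1) - v p) * (w (p.1, p.2 + 1) - w p))
    = ∑ p : Fin M × Fin M,
      (4 * v p - v (p.1 + 1, p.2) - v (p.1 - 1, p.2) - v (p.1, p.2 + 1) - v (p.1, p.2 - 1))
        * w p := by
  have e1 := sum_comp_add_one_fst (v * w)
  have e2 := sum_comp_add_one_snd (v * w)
  have e3 := sum_comp_add_one_fst fun p => v (p.1 - 1, p.2) * w p
  have e4 := sum_comp_add_one_snd fun p => v (p.1, p.2 - 1) * w p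
  simp only [Pi.mul_apply, add_sub_cancel_right] at e1 e2 e3 e4
  rw [← sub_eq_zero, ← Finset.sum_sub_distrib]
  calc _ = ∑ p : Fin M × Fin M,
        ((v (p.1 + 1, p.2) * w (p.1 + 1, p.2) - v p * w p)
          + (v (p.1, p.2 + 1) * w (p.1, p.2 + 1) - v p * w p)
          + (v (p.1 - 1, p.2) * w p - v p * w (p.1 + 1, p.2))
          + (v (p.1, p.2 - 1) * w p - v p * w (p.1, p.2 + 1))) :=
        Finset.sum_congr rfl fun p _ => by ring
    _ = 0 := by
        simp only [Finset.sum_add_distrib, Finset.sum_sub_distrib]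
        rw [e1, e2, ← e3, ← e4]
        ring

lemma dLap_apply (h : ℝ) (v : GridFun M) (p : Fin M × Fin M) :
    dLap M h v p =
      (v (p.1 + 1, p.2) + v (p.1 - 1, p.2) + v (p.1, p.2 + 1) + v (p.1, p.2 - 1) - 4 * v p)
        / h ^ 2 :=
  rfl

/-- Summation by parts: `⟨∇_h v, ∇_h w⟩ = -⟨Δ_h v, w⟩`. -/
lemma sum_grad_mul_grad {h : ℝ} (hh : h ≠ 0) (v w : GridFun M) :
    ∑ p : Fin M × Fin M,
      ((v (p.1 + 1, p.2) - v p) / h * ((w (p.1 + 1, p.2) - w p) / h)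
        + (v (p.1, p.2 + 1) - v p) / h * ((w (p.1, p.2 + 1) - w p) / h))
    = -∑ p, dLap M h v p * w p := by
  have hscale := congrArg (· / h ^ 2) (sum_diff_mul_diff v w)
  simp only [Finset.sum_div] at hscale
  rw [← Finset.sum_neg_distrib]
  convert hscale using 2 with p
  · field_simp
  · rw [dLap_apply]
    field_simp
    ring

lemma hasDerivAt_gradE {h : ℝ} (hh : h ≠ 0) (ε : ℝ) {u : ℝ → GridFun M} {w : GridFun M}
    {t : ℝ} (hu : HasDerivAt u w t) :
    HasDerivAt (fun s => gradE M h ε (u s)) (-(ε ^ 2 * gridInner M h (dLap M h (u t)) w)) t := by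
  have hcoord : ∀ p, HasDerivAt (fun s => u s p) (w p) t := hasDerivAt_pi.mp hu
  have hsq : ∀ p q : Fin M × Fin M, HasDerivAt (fun s => ((u s q - u s p) / h) ^ 2)
      (2 * ((u t q - u t p) / h * ((w q - w p) / h))) t := fun p q => by
    simpa [mul_assoc] using (((hcoord q).sub (hcoord p)).div_const h).fun_pow 2
  have hsum := ((HasDerivAt.fun_sum (u := Finset.univ) fun p _ =>
    (hsq p (p.1 + 1, p.2)).fun_add (hsq p (p.1, p.2 + 1))).const_mul (h ^ 2)).const_mul (ε ^ 2 / 2)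
  refine hsum.congr_deriv ?_
  simp only [← mul_add, ← Finset.mul_sum, sum_grad_mul_grad hh, gridInner]
  ring

lemma hasDerivAt_Eh {h : ℝ} (hh : h ≠ 0) (ε : ℝ) {f F : ℝ → ℝ}
    (hF : ∀ x, HasDerivAt F (-f x) x) {u : ℝ → GridFun M} {w : GridFun M} {t : ℝ}
    (hu : HasDerivAt u w t) :
    HasDerivAt (fun s => Eh M h ε F (u s))
      (-gridInner M h (ε ^ 2 • dLap M h (u t) + fun p => f (u t p)) w) t := by
  refine ((hasDerivAt_gradE hh ε hu).add (hasDerivAt_E1h h hF hu)).congr_deriv ?_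
  simp only [gridInner, Pi.add_apply, Pi.smul_apply, smul_eq_mul, add_mul,
    Finset.sum_add_distrib, mul_assoc, ← Finset.mul_sum]
  ring

lemma continuous_Eh (h ε : ℝ) {F : ℝ → ℝ} (hF : Continuous F) :
    Continuous (Eh M h ε F) := by
  unfold Eh gradE E1h
  fun_prop

end GridFun

open GridFun in
theorem stmt_2_general (M : ℕ) [NeZero M] (L h ε : ℝ) (hL : 0 < L) (hh : h = L / M)
    (f F : ℝ → ℝ) (hF : ∀ x, HasDerivAt F (-f x) x)
    (u : ℝ → GridFun M)
    (hu : DifferentiableOn ℝ u (Set.Ici 0))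
    (hode : ∀ t : ℝ, 0 < t →
      HasDerivAt u (ε ^ 2 • dLap M h (u t) + fun p => f (u t p)) t) :
    AntitoneOn (fun t => Eh M h ε F (u t)) (Set.Ici 0) := by
  have hh0 : h ≠ 0 := by
    rw [hh]
    exact div_ne_zero hL.ne' (Nat.cast_ne_zero.mpr (NeZero.ne M))
  have hderiv : ∀ t ∈ interior (Set.Ici (0 : ℝ)), HasDerivAt (fun s => Eh M h ε F (u s))
      (-gridInner M h (ε ^ 2 • dLap M h (u t) + fun p => f (u t p))
        (ε ^ 2 • dLap M h (u t) + fun p => f (u t p))) t := fun t ht => by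
    rw [interior_Ici] at ht
    exact hasDerivAt_Eh hh0 ε hF (hode t ht)
  refine antitoneOn_of_deriv_nonpos (convex_Ici 0) ?_ ?_ ?_
  · exact (continuous_Eh h ε (continuous_iff_continuousAt.mpr fun x => (hF x).continuousAt))
      |>.comp_continuousOn hu.continuousOn
  · exact fun t ht => (hderiv t ht).differentiableAt.differentiableWithinAt
  · intro t ht
    rw [(hderiv t ht).deriv, neg_nonpos]
    exact gridInner_self_nonneg h _

/-- Energy dissipation of the space-discrete Allen–Cahn equation:
if `u : [0,∞) → ℝ^{M²}` is differentiable and satisfies `du/dt = ε² Δ_h u + f(u)` for `t > 0`,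
then `t ↦ E_h(u(t))` is non-increasing on `[0, ∞)`. -/
theorem stmt_2 (M : ℕ) [NeZero M] (L h ε : ℝ) (hL : 0 < L) (hh : h = L / M) (hε : 0 < ε)
    (f F : ℝ → ℝ) (hf : ContDiff ℝ 1 f) (hF : ∀ x, HasDerivAt F (-f x) x)
    (u : ℝ → GridFun M)
    (hu : DifferentiableOn ℝ u (Set.Ici 0))
    (hode : ∀ t : ℝ, 0 < t →
      HasDerivAt u (ε ^ 2 • dLap M h (u t) + fun p => f (u t p)) t) :
    AntitoneOn (fun t => Eh M h ε F (u t)) (Set.Ici 0) :=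
  stmt_2_general M L h ε hL hh f F hF u hu hode
end
end

section
/- For any real numbers a ≥ 0 and b ≥ 0, the matrix exponential satisfies ‖e^{aΔ_h − bI}‖_∞ ≤ e^{−b}, where I is the M²×M² identity matrix and ‖·‖_∞ is the matrix norm induced by the maximum norm on ℝ^{M²}. -/
open scoped BigOperators
noncomputable section

/-! The discrete Laplacian is `h⁻² (S - 4 I)`, where `S` is the sum of the four neighbor
shifts. Each shift is a precomposition, hence a contraction of the maximum norm, so `‖S‖ ≤ 4`.
Since the scalar part commutes with everything, `e^{aΔ_h - bI} = e^{(a/h²) S} e^{-(b + 4a/h²)}`,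
and `‖e^X‖ ≤ e^{‖X‖}` makes the two factors `4a/h²` cancel. -/

open NormedSpace

theorem norm_exp_le_exp_norm {𝔸 : Type*} [NormedRing 𝔸] [NormOneClass 𝔸] [NormedAlgebra ℝ 𝔸]
    (x : 𝔸) : ‖exp x‖ ≤ Real.exp ‖x‖ := by
  rw [exp_eq_tsum (𝕂 := ℝ)]
  refine (norm_tsum_le_tsum_norm (norm_expSeries_summable' x)).trans ?_
  rw [Real.exp_eq_exp_ℝ, exp_eq_tsum_div]
  refine (norm_expSeries_summable' x).tsum_le_tsum (fun n => ?_)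
    (Real.summable_pow_div_factorial ‖x‖)
  rw [norm_smul, norm_inv, Real.norm_natCast, div_eq_inv_mul]
  gcongr
  exact norm_pow_le x n

theorem norm_exp_sub_smul_one_le {𝔸 : Type*} [NormedRing 𝔸] [NormOneClass 𝔸]
    [NormedAlgebra ℝ 𝔸] [CompleteSpace 𝔸] (x : 𝔸) (c : ℝ) :
    ‖exp (x - c • 1)‖ ≤ Real.exp (‖x‖ - c) := by
  have hcomm : Commute x (algebraMap ℝ 𝔸 (-c)) := (Algebra.commutes _ _).symm
  have hball (y : 𝔸) : y ∈ Metric.eball 0 (expSeries ℝ 𝔸).radius :=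
    (expSeries_radius_eq_top ℝ 𝔸).symm ▸ edist_lt_top _ _
  rw [sub_eq_add_neg, ← neg_smul, ← Algebra.algebraMap_eq_smul_one,
    exp_add_of_commute_of_mem_ball hcomm (hball _) (hball _), ← algebraMap_exp_comm,
    ← Real.exp_eq_exp_ℝ, sub_eq_add_neg, Real.exp_add]
  refine (norm_mul_le _ _).trans ?_
  rw [norm_algebraMap', Real.norm_of_nonneg (Real.exp_pos _).le]
  gcongr
  exact norm_exp_le_exp_norm x

def precompCLM {𝕜 E ι κ : Type*} [Semiring 𝕜] [TopologicalSpace E] [AddCommMonoid E]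
    [Module 𝕜 E] (σ : κ → ι) : (ι → E) →L[𝕜] (κ → E) :=
  ContinuousLinearMap.pi fun k => ContinuousLinearMap.proj (σ k)

theorem norm_precompCLM_le {𝕜 E ι κ : Type*} [NontriviallyNormedField 𝕜]
    [SeminormedAddCommGroup E] [NormedSpace 𝕜 E] [Fintype ι] [Fintype κ] (σ : κ → ι) :
    ‖(precompCLM σ : (ι → E) →L[𝕜] (κ → E))‖ ≤ 1 :=
  ContinuousLinearMap.norm_pi_le_of_le (fun k =>
    ContinuousLinearMap.opNorm_le_bound _ zero_le_one fun v => by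
      simpa using norm_le_pi_norm v (σ k)) zero_le_one

def neighborSum (M : ℕ) [NeZero M] : GridFun M →L[ℝ] GridFun M :=
  precompCLM (fun p => (p.1 + 1, p.2)) + precompCLM (fun p => (p.1 - 1, p.2)) +
    precompCLM (fun p => (p.1, p.2 + 1)) + precompCLM (fun p => (p.1, p.2 - 1))

theorem norm_neighborSum_le (M : ℕ) [NeZero M] : ‖neighborSum M‖ ≤ 4 := by
  calc ‖neighborSum M‖ ≤ (1 : ℝ) + 1 + 1 + 1 :=
        norm_add₄_le.trans (by gcongr <;> exact norm_precompCLM_le _)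
    _ = 4 := by norm_num

theorem dLap_eq_smul_neighborSum_sub (M : ℕ) [NeZero M] (h : ℝ) :
    dLap M h = (h ^ 2)⁻¹ • (neighborSum M - (4 : ℝ) • 1) := by
  ext v p
  simp only [dLap, dLapL, LinearMap.coe_toContinuousLinearMap', LinearMap.coe_mk,
    AddHom.coe_mk, neighborSum, precompCLM, smul_apply, sub_apply, add_apply,
    ContinuousLinearMap.coe_pi', ContinuousLinearMap.proj_apply, one_apply_eq_self,
    Pi.smul_apply, Pi.sub_apply, Pi.add_apply, smul_eq_mul]
  ring

theorem stmt_3_general (M : ℕ) [NeZero M] (L h : ℝ)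
    (a b : ℝ) (ha : 0 ≤ a) :
    ‖NormedSpace.exp (a • dLap M h - b • (1 : GridFun M →L[ℝ] GridFun M))‖
      ≤ Real.exp (-b) := by
  have hS : ‖(a / h ^ 2) • neighborSum M‖ ≤ 4 * a / h ^ 2 := by
    rw [norm_smul, Real.norm_of_nonneg (by positivity)]
    calc a / h ^ 2 * ‖neighborSum M‖ ≤ a / h ^ 2 * 4 := by gcongr; exact norm_neighborSum_le M
      _ = 4 * a / h ^ 2 := by ring
  have hsplit : a • dLap M h - b • (1 : GridFun M →L[ℝ] GridFun M) =
      (a / h ^ 2) • neighborSum M - (b + 4 * a / h ^ 2) • 1 := by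
    rw [dLap_eq_smul_neighborSum_sub]; module
  calc _ ≤ Real.exp (‖(a / h ^ 2) • neighborSum M‖ - (b + 4 * a / h ^ 2)) := by
        rw [hsplit]; exact norm_exp_sub_smul_one_le _ _
    _ ≤ Real.exp (-b) := by gcongr; linarith

/-- For `a, b ≥ 0`, `‖e^{aΔ_h − bI}‖_∞ ≤ e^{−b}`, where the operator norm is the one induced by
the maximum norm on `ℝ^{M²}` (the sup norm of the Pi type `GridFun M`). -/
theorem stmt_3 (M : ℕ) [NeZero M] (L h : ℝ) (hL : 0 < L) (hh : h = L / M)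
    (a b : ℝ) (ha : 0 ≤ a) (hb : 0 ≤ b) :
    ‖NormedSpace.exp (a • dLap M h - b • (1 : GridFun M →L[ℝ] GridFun M))‖
      ≤ Real.exp (-b) :=
  stmt_3_general M L h a b ha
end
end

section
/- (Energy dissipation of GSAV-EI1.) For any stabilizing constant κ > 0, any time step τ > 0, any initial grid function u_init, and every n ≥ 0, the GSAV-EI1 iterates satisfy 𝓔_h(u^{n+1}, s^{n+1}) ≤ 𝓔_h(uⁿ, sⁿ). -/
open scoped BigOperators
noncomputable section

/-!
Write `L = κ g I - ε² Δ_h` and `δ = u^{n+1} - uⁿ`. Since `L` commutes with its exponential,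
`δ = K c` with `K = ∫₀^τ e^{-θL} dθ` and `c = g f(uⁿ) + ε² Δ_h uⁿ`, and `L δ = c - e^{-τL} c`.
Summation by parts makes `Δ_h` symmetric with `(ε²/2)‖∇_h v‖² = -(ε²/2)⟨Δ_h v, v⟩`, and
expanding the quadratic form gives
`𝓔_h(u^{n+1}, s^{n+1}) - 𝓔_h(uⁿ, sⁿ) = -(h²/2) (κ g δ ⬝ᵥ δ + (c + e^{-τL} c) ⬝ᵥ δ)`.
The last pairing is nonnegative for `τ ≥ 0`: as a function of `τ` it starts at `0` and has
derivative `2 ‖e^{-τL} c‖²`.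
-/

theorem Fintype.sum_shift_sub_mul_shift_sub {G : Type*} [AddCommGroup G] [Fintype G]
    (f g : G → ℝ) (e : G) :
    ∑ x, (f (x + e) - f x) * (g (x + e) - g x)
      = -∑ x, (f (x + e) + f (x - e) - 2 * f x) * g x := by
  have h₁ : ∑ x, f (x + e) * g (x + e) = ∑ x, f x * g x :=
    Equiv.sum_comp (Equiv.addRight e) fun x => f x * g x
  have h₂ : ∑ x, f (x - e) * g x = ∑ x, f x * g (x + e) := by
    simpa using Equiv.sum_comp (Equiv.subRight e) fun x => f x * g (x + e)
  calc ∑ x, (f (x + e) - f x) * (g (x + e) - g x)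
      = ∑ x, (f (x + e) * g (x + e) - f x * g x) + ∑ x, (f (x - e) * g x - f x * g (x + e))
        - ∑ x, (f (x + e) + f (x - e) - 2 * f x) * g x := by
        rw [← Finset.sum_add_distrib, ← Finset.sum_sub_distrib]
        exact Finset.sum_congr rfl fun x _ => by ring
    _ = _ := by rw [Finset.sum_sub_distrib, Finset.sum_sub_distrib, h₁, h₂]; ring

open NormedSpace

section ExpIntegral

variable {𝔸 : Type*} [NormedRing 𝔸] [NormedAlgebra ℝ 𝔸]

def expNegIntegral (a : 𝔸) (t : ℝ) : 𝔸 := ∫ θ in (0:ℝ)..t, exp (-(θ • a))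

theorem expNegIntegral_zero (a : 𝔸) : expNegIntegral a 0 = 0 :=
  intervalIntegral.integral_same

theorem integral_exp_neg_sub_smul (a : 𝔸) (t : ℝ) :
    ∫ θ in (0:ℝ)..t, exp (-((t - θ) • a)) = expNegIntegral a t := by
  simp [intervalIntegral.integral_comp_sub_left (fun θ => exp (-(θ • a))), expNegIntegral]

variable [CompleteSpace 𝔸]

theorem hasDerivAt_exp_neg_smul (a : 𝔸) (t : ℝ) :
    HasDerivAt (fun t : ℝ => exp (-(t • a))) (-a * exp (-(t • a))) t := by
  simpa only [smul_neg] using hasDerivAt_exp_smul_const' (-a) t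

theorem continuous_exp_neg_smul (a : 𝔸) : Continuous fun t : ℝ => exp (-(t • a)) :=
  continuous_iff_continuousAt.2 fun t => (hasDerivAt_exp_neg_smul a t).continuousAt

theorem hasDerivAt_expNegIntegral (a : 𝔸) (t : ℝ) :
    HasDerivAt (expNegIntegral a) (exp (-(t • a))) t :=
  ((continuous_exp_neg_smul a).integral_hasStrictDerivAt 0 t).hasDerivAt

theorem mul_expNegIntegral (a : 𝔸) (t : ℝ) : a * expNegIntegral a t = 1 - exp (-(t • a)) := by
  have hint := (continuous_exp_neg_smul a).intervalIntegrable (μ := MeasureTheory.volume) 0 t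
  rw [expNegIntegral, ← ContinuousLinearMap.mul_apply' ℝ,
    ← ContinuousLinearMap.intervalIntegral_comp_comm _ hint,
    intervalIntegral.integral_eq_sub_of_hasDerivAt (f := fun θ : ℝ => -exp (-(θ • a)))]
  · simp [neg_add_eq_sub]
  · intro θ _
    simpa using (hasDerivAt_exp_neg_smul a θ).fun_neg
  · exact (continuous_const.mul (continuous_exp_neg_smul a)).intervalIntegrable _ _

theorem commute_expNegIntegral (a : 𝔸) (t : ℝ) : Commute a (expNegIntegral a t) := by
  have hint := (continuous_exp_neg_smul a).intervalIntegrable (μ := MeasureTheory.volume) 0 t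
  have hcomm : ∀ θ : ℝ, Commute a (exp (-(θ • a))) := fun θ =>
    ((Commute.refl a).smul_right θ).neg_right.exp_right
  calc a * expNegIntegral a t = ∫ θ in (0:ℝ)..t, a * exp (-(θ • a)) :=
        (ContinuousLinearMap.intervalIntegral_comp_comm (ContinuousLinearMap.mul ℝ 𝔸 a) hint).symm
    _ = ∫ θ in (0:ℝ)..t, exp (-(θ • a)) * a := by simp_rw [(hcomm _).eq]
    _ = expNegIntegral a t * a :=
        ContinuousLinearMap.intervalIntegral_comp_comm ((ContinuousLinearMap.mul ℝ 𝔸).flip a) hint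

theorem expNegIntegral_mul (a : 𝔸) (t : ℝ) : expNegIntegral a t * a = 1 - exp (-(t • a)) :=
  (commute_expNegIntegral a t).eq.symm.trans (mul_expNegIntegral a t)

end ExpIntegral

theorem HasDerivAt.dotProduct {ι : Type*} [Fintype ι] {f g : ℝ → ι → ℝ} {f' g' : ι → ℝ} {t : ℝ}
    (hf : HasDerivAt f f' t) (hg : HasDerivAt g g' t) :
    HasDerivAt (fun t => f t ⬝ᵥ g t) (f' ⬝ᵥ g t + f t ⬝ᵥ g') t := by
  simp only [_root_.dotProduct, ← Finset.sum_add_distrib]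
  exact HasDerivAt.fun_sum fun i _ => (hasDerivAt_pi.1 hf i).mul (hasDerivAt_pi.1 hg i)

/-- With `K t = expNegIntegral L t c` we have `L K t = c - e^{-tL} c`, so by symmetry of `L`
the pairing `(c + e^{-tL} c) ⬝ᵥ K t` has derivative `2 ‖e^{-tL} c‖²` and vanishes at `t = 0`. -/
theorem add_exp_neg_smul_dotProduct_expNegIntegral_nonneg {ι : Type*} [Fintype ι]
    (L : (ι → ℝ) →L[ℝ] (ι → ℝ)) (hL : ∀ v w, L v ⬝ᵥ w = v ⬝ᵥ L w) (c : ι → ℝ) {t : ℝ}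
    (ht : 0 ≤ t) : 0 ≤ (c + exp (-(t • L)) c) ⬝ᵥ expNegIntegral L t c := by
  set S : ℝ → ι → ℝ := fun t => exp (-(t • L)) c
  set K : ℝ → ι → ℝ := fun t => expNegIntegral L t c
  have hS (t : ℝ) : HasDerivAt S (-L (S t)) t := by
    simpa using (hasDerivAt_exp_neg_smul L t).clm_apply (hasDerivAt_const t c)
  have hK (t : ℝ) : HasDerivAt K (S t) t := by
    simpa using (hasDerivAt_expNegIntegral L t).clm_apply (hasDerivAt_const t c)
  have hLK (t : ℝ) : L (K t) = c - S t := by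
    simpa using congr($(mul_expNegIntegral L t) c)
  have hχ (t : ℝ) : HasDerivAt (fun t => (c + S t) ⬝ᵥ K t) (2 * (S t ⬝ᵥ S t)) t := by
    convert ((hasDerivAt_const t c).fun_add (hS t)).dotProduct (hK t) using 1
    rw [zero_add, neg_dotProduct, hL, hLK, dotProduct_sub, add_dotProduct, dotProduct_comm c]
    ring
  have hmono := monotone_of_hasDerivAt_nonneg hχ fun t =>
    mul_nonneg zero_le_two (Finset.sum_nonneg fun i _ => mul_self_nonneg (S t i))
  simpa [K, expNegIntegral_zero] using hmono ht

section Grid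

variable {M : ℕ} [NeZero M]

theorem dLap_apply (h : ℝ) (v : GridFun M) (p : Fin M × Fin M) :
    dLap M h v p = (v (p.1 + 1, p.2) + v (p.1 - 1, p.2) + v (p.1, p.2 + 1)
      + v (p.1, p.2 - 1) - 4 * v p) / h ^ 2 := rfl

theorem dLap_dotProduct (h : ℝ) (v w : GridFun M) :
    dLap M h v ⬝ᵥ w = -(∑ p : Fin M × Fin M,
      ((v (p.1 + 1, p.2) - v p) * (w (p.1 + 1, p.2) - w p)
        + (v (p.1, p.2 + 1) - v p) * (w (p.1, p.2 + 1) - w p))) / h ^ 2 := by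
  have e₁ (p : Fin M × Fin M) : (p.1 + 1, p.2) = p + (1, 0) := Prod.ext rfl (add_zero _).symm
  have e₁' (p : Fin M × Fin M) : (p.1 - 1, p.2) = p - (1, 0) := Prod.ext rfl (sub_zero _).symm
  have e₂ (p : Fin M × Fin M) : (p.1, p.2 + 1) = p + (0, 1) := Prod.ext (add_zero _).symm rfl
  have e₂' (p : Fin M × Fin M) : (p.1, p.2 - 1) = p - (0, 1) := Prod.ext (sub_zero _).symm rfl
  simp only [dotProduct, dLap_apply, e₁, e₁', e₂, e₂', Finset.sum_add_distrib,
    Fintype.sum_shift_sub_mul_shift_sub]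
  rw [neg_add, neg_neg, neg_neg, ← Finset.sum_add_distrib, Finset.sum_div]
  exact Finset.sum_congr rfl fun p _ => by ring

theorem dLap_dotProduct_comm (h : ℝ) (v w : GridFun M) :
    dLap M h v ⬝ᵥ w = v ⬝ᵥ dLap M h w := by
  rw [dLap_dotProduct, dotProduct_comm, dLap_dotProduct]
  congr 2
  exact Finset.sum_congr rfl fun p _ => by ring

theorem gradE_eq_dLap_dotProduct (h ε : ℝ) (v : GridFun M) :
    gradE M h ε v = -(ε ^ 2 * h ^ 2 / 2) * (dLap M h v ⬝ᵥ v) := by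
  rw [gradE, dLap_dotProduct]
  simp only [div_pow, ← add_div, ← Finset.sum_div, ← pow_two]
  rcases eq_or_ne h 0 with rfl | hh
  · simp
  · field_simp

theorem Lkappa_apply (h ε κ g0 : ℝ) (v : GridFun M) :
    Lkappa M h ε κ g0 v = (κ * g0) • v - ε ^ 2 • dLap M h v := by
  simp [Lkappa]

theorem Lkappa_dotProduct_comm (h ε κ g0 : ℝ) (v w : GridFun M) :
    Lkappa M h ε κ g0 v ⬝ᵥ w = v ⬝ᵥ Lkappa M h ε κ g0 w := by
  simp only [Lkappa_apply, sub_dotProduct, dotProduct_sub, smul_dotProduct, dotProduct_smul,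
    dLap_dotProduct_comm, dotProduct_comm v w]

theorem EI1step_eq (h ε κ τ : ℝ) (f F σ : ℝ → ℝ) (u : GridFun M) (s : ℝ) :
    let g := gFun M h F σ u s
    let δ := expNegIntegral (Lkappa M h ε κ g) τ (Nkappa M h κ g f F σ u s - Lkappa M h ε κ g u)
    EI1step M h ε κ τ f F σ (u, s) = (u + δ, s - g * (h ^ 2 * ((fun p => f (u p)) ⬝ᵥ δ))) := by
  simp only [EI1step]
  generalize Nkappa M h κ (gFun M h F σ u s) f F σ u s = N
  generalize Lkappa M h ε κ (gFun M h F σ u s) = L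
  have hJ : ∫ θ in (0:ℝ)..τ, exp (-((τ - θ) • L)) = expNegIntegral L τ :=
    integral_exp_neg_sub_smul L τ
  have hJL : expNegIntegral L τ (L u) = u - exp (-(τ • L)) u := by
    simpa using congr($(expNegIntegral_mul L τ) u)
  have hu₁ : exp (-(τ • L)) u + expNegIntegral L τ N = u + expNegIntegral L τ (N - L u) := by
    rw [map_sub, hJL]
    abel
  rw [hJ, hu₁, add_sub_cancel_left]
  rfl

theorem modE_EI1step_le (h ε κ τ : ℝ) (f F σ : ℝ → ℝ) (hσpos : ∀ x, 0 < σ x) (hκ : 0 ≤ κ)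
    (hτ : 0 ≤ τ) (us : GridFun M × ℝ) :
    modE M h ε (EI1step M h ε κ τ f F σ us).1 (EI1step M h ε κ τ f F σ us).2
      ≤ modE M h ε us.1 us.2 := by
  obtain ⟨u, s⟩ := us
  rw [EI1step_eq]
  set g := gFun M h F σ u s
  set L := Lkappa M h ε κ g
  set c := Nkappa M h κ g f F σ u s - L u
  set δ := expNegIntegral L τ c
  have hm : 0 ≤ κ * g := mul_nonneg hκ (div_pos (hσpos _) (hσpos _)).le
  have hkey : 0 ≤ (c + exp (-(τ • L)) c) ⬝ᵥ δ :=
    add_exp_neg_smul_dotProduct_expNegIntegral_nonneg L (Lkappa_dotProduct_comm h ε κ g) c hτ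
  have hLδ : (κ * g) • δ - ε ^ 2 • dLap M h δ = c - exp (-(τ • L)) c := by
    rw [← Lkappa_apply]
    simpa using congr($(mul_expNegIntegral L τ) c)
  have hc : c = g • (fun p => f (u p)) + ε ^ 2 • dLap M h u := by
    ext p
    simp only [c, L, Nkappa, Lkappa_apply, Pi.add_apply, Pi.sub_apply, Pi.smul_apply, smul_eq_mul]
    ring
  have hgrad : dLap M h (u + δ) ⬝ᵥ (u + δ)
      = dLap M h u ⬝ᵥ u + 2 * (dLap M h u ⬝ᵥ δ) + dLap M h δ ⬝ᵥ δ := by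
    rw [map_add, add_dotProduct, dotProduct_add, dotProduct_add, dLap_dotProduct_comm h δ u,
      dotProduct_comm δ]
    ring
  have hcδ := congr($hc ⬝ᵥ δ)
  have hLδδ := congr($hLδ ⬝ᵥ δ)
  simp only [add_dotProduct, sub_dotProduct, smul_dotProduct, smul_eq_mul] at hcδ hLδδ hkey
  have hδδ : 0 ≤ δ ⬝ᵥ δ := Finset.sum_nonneg fun p _ => mul_self_nonneg (δ p)
  simp only [modE, gradE_eq_dLap_dotProduct, hgrad]
  have hint := mul_nonneg (sq_nonneg h) (add_nonneg (mul_nonneg hm hδδ) hkey)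
  linear_combination (1/2) * hint + h^2 * hcδ + (h^2/2) * hLδδ

end Grid

theorem stmt_5_general (M : ℕ) [NeZero M] (h ε : ℝ)
    (f F σ : ℝ → ℝ) (hσpos : ∀ x, 0 < σ x)
    (κ : ℝ) (hκ : 0 < κ)
    (τ : ℝ) (hτ : 0 < τ) (uinit : GridFun M) :
    ∀ n : ℕ,
      modE M h ε (EI1 M h ε κ τ f F σ uinit (n + 1)).1 (EI1 M h ε κ τ f F σ uinit (n + 1)).2
        ≤ modE M h ε (EI1 M h ε κ τ f F σ uinit n).1 (EI1 M h ε κ τ f F σ uinit n).2 :=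
  fun n => modE_EI1step_le h ε κ τ f F σ hσpos hκ.le hτ.le (EI1 M h ε κ τ f F σ uinit n)

/-- Energy dissipation of GSAV-EI1: for any `κ > 0`, `τ > 0`, initial grid function, and `n ≥ 0`,
`𝓔_h(u^{n+1}, s^{n+1}) ≤ 𝓔_h(uⁿ, sⁿ)`. -/
theorem stmt_5 (M : ℕ) [NeZero M] (L h ε : ℝ) (hL : 0 < L) (hh : h = L / M) (hε : 0 < ε)
    (f F σ : ℝ → ℝ) (hF : ∀ x, HasDerivAt F (-f x) x)
    (hσ : ContDiff ℝ 1 σ) (hσpos : ∀ x, 0 < σ x) (hσmono : ∀ x, 0 ≤ deriv σ x)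
    (κ : ℝ) (hκ : 0 < κ) (hf : ContDiff ℝ 1 f)
    (τ : ℝ) (hτ : 0 < τ) (uinit : GridFun M) :
    ∀ n : ℕ,
      modE M h ε (EI1 M h ε κ τ f F σ uinit (n + 1)).1 (EI1 M h ε κ τ f F σ uinit (n + 1)).2
        ≤ modE M h ε (EI1 M h ε κ τ f F σ uinit n).1 (EI1 M h ε κ τ f F σ uinit n).2 :=
  stmt_5_general M h ε f F σ hσpos κ hκ τ hτ uinit
end
end

section
/- (MBP of GSAV-EI1.) Suppose β > 0 satisfies f(β) ≤ 0 ≤ f(−β) and κ ≥ max_{|ξ|≤β} |f'(ξ)|. Then for any time step τ > 0: if ‖u_init‖_∞ ≤ β, then the GSAV-EI1 iterates satisfy ‖uⁿ‖_∞ ≤ β for every n ≥ 0. -/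
open scoped BigOperators
noncomputable section

/-!
Write `L := κ g I - ε² Δ_h` with `g = g(uⁿ, sⁿ) ≥ 0`. Off the diagonal `-L` is entrywise
nonnegative (`-L + c I ≥ 0` for `c = κ g + 4ε²/h²`), so `E := e^{-τL} = e^{-τc} e^{τ(c I - L)}`
and `Φ := ∫₀^τ e^{-(τ-θ)L} dθ` preserve nonnegative grid functions. Moreover `Φ L = I - E`, and
`L` maps the constant `β` to the constant `κ g β`. Since `x ↦ f x + κ x` is nondecreasing on
`[-β, β]`, `|N_κ(uⁿ, sⁿ)| ≤ κ g β = L β` entrywise whenever `|uⁿ| ≤ β`, hence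
`|E uⁿ + Φ N| ≤ E β + Φ (L β) = β`.
-/

open NormedSpace Set

section NonnegPreserving

variable {V : Type*} [NormedAddCommGroup V] [NormedSpace ℝ V] [PartialOrder V]

lemma pow_apply_nonneg {T : V →L[ℝ] V} (hT : ∀ v, 0 ≤ v → 0 ≤ T v) (n : ℕ) {v : V}
    (hv : 0 ≤ v) : 0 ≤ (T ^ n) v := by
  induction n with
  | zero => exact hv
  | succ n ih => rw [pow_succ', mul_apply_eq_comp]; exact hT _ ih

variable [CompleteSpace V] [IsOrderedAddMonoid V] [OrderClosedTopology V] [PosSMulMono ℝ V]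

lemma exp_apply_nonneg {T : V →L[ℝ] V} (hT : ∀ v, 0 ≤ v → 0 ≤ T v) {v : V} (hv : 0 ≤ v) :
    0 ≤ exp T v := by
  have hsum := exp_series_hasSum_exp' (𝕂 := ℝ) T
  change 0 ≤ ContinuousLinearMap.apply ℝ V v (exp T)
  rw [← (hsum.mapL (ContinuousLinearMap.apply ℝ V v)).tsum_eq]
  exact tsum_nonneg fun n => smul_nonneg (by positivity) (pow_apply_nonneg hT n hv)

lemma exp_apply_nonneg_of_add_smul_one {T : V →L[ℝ] V} {c : ℝ}
    (hT : ∀ v, 0 ≤ v → 0 ≤ (T + c • 1) v) {v : V} (hv : 0 ≤ v) : 0 ≤ exp T v := by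
  let : NormedAlgebra ℚ (V →L[ℝ] V) := .restrictScalars ℚ ℝ _
  have hcomm : Commute (T + c • 1) ((-c) • 1) := (Commute.one_right _).smul_right _
  have hscalar : exp ((-c) • 1 : V →L[ℝ] V) = Real.exp (-c) • 1 := by
    rw [← Algebra.algebraMap_eq_smul_one, ← Algebra.algebraMap_eq_smul_one, ← algebraMap_exp_comm,
      Real.exp_eq_exp_ℝ]
  have hsplit : T = (T + c • 1) + (-c) • 1 := by rw [neg_smul]; abel
  rw [hsplit, exp_add_of_commute hcomm, hscalar, mul_apply_eq_comp]
  exact exp_apply_nonneg hT (smul_nonneg (Real.exp_nonneg _) hv)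

end NonnegPreserving

section ExpIntegral

variable {𝔸 : Type*} [NormedRing 𝔸] [NormedAlgebra ℝ 𝔸] [CompleteSpace 𝔸]

lemma hasDerivAt_exp_neg_sub_smul (A : 𝔸) (τ θ : ℝ) :
    HasDerivAt (fun θ : ℝ => exp (-((τ - θ) • A))) (exp (-((τ - θ) • A)) * A) θ := by
  have hneg : ∀ θ : ℝ, -((τ - θ) • A) = (θ - τ) • A := fun θ => by rw [← neg_smul, neg_sub]
  simp only [hneg]
  exact (hasDerivAt_exp_smul_const A (θ - τ)).comp_sub_const θ τ

lemma continuous_exp_neg_sub_smul (A : 𝔸) (τ : ℝ) :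
    Continuous fun θ : ℝ => exp (-((τ - θ) • A)) :=
  continuous_iff_continuousAt.2 fun θ => (hasDerivAt_exp_neg_sub_smul A τ θ).continuousAt

lemma intervalIntegral_exp_neg_sub_smul_mul (A : 𝔸) (τ : ℝ) :
    (∫ θ in (0 : ℝ)..τ, exp (-((τ - θ) • A))) * A = 1 - exp (-(τ • A)) := by
  have hcont := continuous_exp_neg_sub_smul A τ
  calc (∫ θ in (0 : ℝ)..τ, exp (-((τ - θ) • A))) * A
      = ∫ θ in (0 : ℝ)..τ, exp (-((τ - θ) • A)) * A :=
        (((ContinuousLinearMap.mul ℝ 𝔸).flip A).intervalIntegral_comp_comm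
          (hcont.intervalIntegrable 0 τ)).symm
    _ = exp (-((τ - τ) • A)) - exp (-((τ - 0) • A)) :=
        intervalIntegral.integral_eq_sub_of_hasDerivAt
          (fun θ _ => hasDerivAt_exp_neg_sub_smul A τ θ)
          ((hcont.mul continuous_const).intervalIntegrable 0 τ)
    _ = 1 - exp (-(τ • A)) := by simp

end ExpIntegral

lemma intervalIntegral_apply_nonneg {ι : Type*} [Fintype ι]
    {F : ℝ → (ι → ℝ) →L[ℝ] (ι → ℝ)} (hF : Continuous F) {a b : ℝ} (hab : a ≤ b)
    (hpos : ∀ θ ∈ Icc a b, ∀ v, 0 ≤ v → 0 ≤ F θ v) {v : ι → ℝ} (hv : 0 ≤ v) :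
    0 ≤ (∫ θ in a..b, F θ) v := by
  intro p
  have hFv : Continuous fun θ => F θ v := (ContinuousLinearMap.apply ℝ _ v).continuous.comp hF
  rw [ContinuousLinearMap.intervalIntegral_apply (hF.intervalIntegrable a b)]
  have hcomm := (ContinuousLinearMap.proj (R := ℝ) (φ := fun _ : ι => ℝ) p)
    |>.intervalIntegral_comp_comm (hFv.intervalIntegrable (μ := MeasureTheory.volume) a b)
  simp only [ContinuousLinearMap.proj_apply] at hcomm
  rw [Pi.zero_apply, ← hcomm]
  exact intervalIntegral.integral_nonneg hab fun θ hθ => hpos θ hθ v hv p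

lemma abs_map_add_map_le {V G : Type*} [AddCommGroup V] [Lattice V] [IsOrderedAddMonoid V]
    [FunLike G V V] [AddMonoidHomClass G V V] {E Φ : G}
    (hE : ∀ v, 0 ≤ v → 0 ≤ E v) (hΦ : ∀ v, 0 ≤ v → 0 ≤ Φ v) {u N w a : V}
    (hΦa : Φ a = w - E w) (hu : |u| ≤ w) (hN : |N| ≤ a) : |E u + Φ N| ≤ w := by
  have mono : ∀ T : G, (∀ v, 0 ≤ v → 0 ≤ T v) → Monotone T := fun T hT x y hxy => by
    simpa [map_sub] using hT (y - x) (sub_nonneg.2 hxy)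
  obtain ⟨hu₁, hu₂⟩ := abs_le'.1 hu
  obtain ⟨hN₁, hN₂⟩ := abs_le'.1 hN
  have hEu₁ := mono E hE hu₁
  have hEu₂ := mono E hE hu₂
  have hΦN₁ := mono Φ hΦ hN₁
  have hΦN₂ := mono Φ hΦ hN₂
  simp only [map_neg, hΦa] at hEu₂ hΦN₂
  refine abs_le'.2 ⟨?_, ?_⟩
  · calc E u + Φ N ≤ E w + (w - E w) := add_le_add hEu₁ (hΦa ▸ hΦN₁)
      _ = w := by abel
  · calc -(E u + Φ N) = -E u + -Φ N := neg_add _ _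
      _ ≤ E w + (w - E w) := add_le_add hEu₂ hΦN₂
      _ = w := by abel

lemma pi_norm_le_iff_abs_le_const {ι : Type*} [Fintype ι] [Nonempty ι] {v : ι → ℝ} {β : ℝ} :
    ‖v‖ ≤ β ↔ |v| ≤ fun _ => β := by
  simp [pi_norm_le_iff_of_nonempty, Pi.le_def]

lemma abs_add_mul_self_le_of_abs_deriv_le {f : ℝ → ℝ} (hf : Differentiable ℝ f) {κ β : ℝ}
    (hfβ : f β ≤ 0) (hfβ' : 0 ≤ f (-β)) (hκf : ∀ ξ ∈ Icc (-β) β, |deriv f ξ| ≤ κ)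
    {ξ : ℝ} (hξ : |ξ| ≤ β) : |f ξ + κ * ξ| ≤ κ * β := by
  have hmono : MonotoneOn (fun x => f x + κ * x) (Icc (-β) β) := by
    have hg : Differentiable ℝ fun x => f x + κ * x := hf.add (differentiable_id.const_mul κ)
    refine monotoneOn_of_deriv_nonneg (convex_Icc _ _) hg.continuous.continuousOn
      hg.differentiableOn fun x hx => ?_
    rw [interior_Icc] at hx
    have hd : deriv (fun x => f x + κ * x) x = deriv f x + κ := by
      simpa using ((hf x).hasDerivAt.fun_add ((hasDerivAt_id x).const_mul κ)).deriv
    rw [hd]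
    linarith [(abs_le.1 (hκf x (Ioo_subset_Icc_self hx))).1]
  obtain ⟨hξ₁, hξ₂⟩ := abs_le.1 hξ
  have hlow := hmono ⟨le_rfl, by linarith⟩ ⟨hξ₁, hξ₂⟩ hξ₁
  have hhigh := hmono ⟨hξ₁, hξ₂⟩ ⟨by linarith, le_rfl⟩ hξ₂
  simp only at hlow hhigh
  exact abs_le.2 ⟨by linarith, by linarith⟩

section GSAV

variable {M : ℕ} [NeZero M]

lemma dLap_add_smul_nonneg (h : ℝ) {v : GridFun M} (hv : 0 ≤ v) :
    0 ≤ dLap M h v + (4 / h ^ 2) • v := by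
  intro p
  have hsum : (dLap M h v + (4 / h ^ 2) • v) p
      = (v (p.1 + 1, p.2) + v (p.1 - 1, p.2) + v (p.1, p.2 + 1) + v (p.1, p.2 - 1)) / h ^ 2 := by
    simp only [dLap, dLapL, LinearMap.coe_toContinuousLinearMap', LinearMap.coe_mk,
      AddHom.coe_mk, Pi.add_apply, Pi.smul_apply, smul_eq_mul]
    ring
  rw [Pi.zero_apply, hsum]
  exact div_nonneg (add_nonneg (add_nonneg (add_nonneg (hv _) (hv _)) (hv _)) (hv _)) (sq_nonneg h)

lemma Lkappa_const (h ε κ g0 c : ℝ) :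
    Lkappa M h ε κ g0 (fun _ => c) = fun _ => κ * g0 * c := by
  funext p
  simp only [Lkappa, dLap, dLapL, sub_apply, smul_apply, one_apply_eq_self,
    LinearMap.coe_toContinuousLinearMap', LinearMap.coe_mk, AddHom.coe_mk, Pi.sub_apply,
    Pi.smul_apply, smul_eq_mul]
  ring

lemma exp_neg_smul_Lkappa_apply_nonneg (h ε κ g0 : ℝ) {r : ℝ} (hr : 0 ≤ r) {v : GridFun M}
    (hv : 0 ≤ v) : 0 ≤ exp (-(r • Lkappa M h ε κ g0)) v := by
  refine exp_apply_nonneg_of_add_smul_one (c := r * (κ * g0) + r * ε ^ 2 * (4 / h ^ 2))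
    (fun w hw => ?_) hv
  have hshift : (-(r • Lkappa M h ε κ g0) + (r * (κ * g0) + r * ε ^ 2 * (4 / h ^ 2)) •
      (1 : GridFun M →L[ℝ] GridFun M)) w
      = (r * ε ^ 2) • (dLap M h w + (4 / h ^ 2) • w) := by
    funext p
    simp only [Lkappa, add_apply, neg_apply, sub_apply, smul_apply, one_apply_eq_self,
      Pi.add_apply, Pi.neg_apply, Pi.sub_apply, Pi.smul_apply, smul_eq_mul]
    ring
  rw [hshift]
  exact smul_nonneg (by positivity) (dLap_add_smul_nonneg h hw)

lemma norm_EI1step_fst_le (h ε κ τ : ℝ) (hτ : 0 ≤ τ) (f F σ : ℝ → ℝ) (hσpos : ∀ x, 0 < σ x)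
    (hf : Differentiable ℝ f) {β : ℝ} (hfβ : f β ≤ 0) (hfβ' : 0 ≤ f (-β))
    (hκf : ∀ ξ ∈ Icc (-β) β, |deriv f ξ| ≤ κ) {us : GridFun M × ℝ} (hu : ‖us.1‖ ≤ β) :
    ‖(EI1step M h ε κ τ f F σ us).1‖ ≤ β := by
  set g0 := gFun M h F σ us.1 us.2
  set Lk := Lkappa M h ε κ g0
  have hg0 : 0 ≤ g0 := (div_pos (hσpos _) (hσpos _)).le
  have hΦL : (∫ θ in (0 : ℝ)..τ, exp (-((τ - θ) • Lk))) (Lk fun _ => β)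
      = (fun _ => β) - exp (-(τ • Lk)) (fun _ => β) := by
    rw [← mul_apply_eq_comp, intervalIntegral_exp_neg_sub_smul_mul Lk τ]
    rfl
  have hN : |Nkappa M h κ g0 f F σ us.1 us.2| ≤ Lk fun _ => β := by
    rw [Lkappa_const]
    intro p
    have hup : |us.1 p| ≤ β := (pi_norm_le_iff_abs_le_const.1 hu) p
    calc |g0 * f (us.1 p) + κ * g0 * us.1 p| = |g0 * (f (us.1 p) + κ * us.1 p)| := by ring_nf
      _ = g0 * |f (us.1 p) + κ * us.1 p| := by rw [abs_mul, abs_of_nonneg hg0]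
      _ ≤ g0 * (κ * β) := mul_le_mul_of_nonneg_left
          (abs_add_mul_self_le_of_abs_deriv_le hf hfβ hfβ' hκf hup) hg0
      _ = κ * g0 * β := by ring
  rw [pi_norm_le_iff_abs_le_const] at hu ⊢
  exact abs_map_add_map_le (fun v hv => exp_neg_smul_Lkappa_apply_nonneg h ε κ g0 hτ hv)
    (fun v hv => intervalIntegral_apply_nonneg (continuous_exp_neg_sub_smul Lk τ) hτ
      (fun θ hθ w hw => exp_neg_smul_Lkappa_apply_nonneg h ε κ g0 (sub_nonneg.2 hθ.2) hw) hv)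
    hΦL hu hN

end GSAV

theorem stmt_7_general (M : ℕ) [NeZero M] (h ε : ℝ)
    (f F σ : ℝ → ℝ) (hσpos : ∀ x, 0 < σ x)
    (κ : ℝ) (hf : ContDiff ℝ 1 f)
    (β : ℝ) (hfβ : f β ≤ 0) (hfβ' : 0 ≤ f (-β))
    (hκf : ∀ ξ ∈ Set.Icc (-β) β, |deriv f ξ| ≤ κ)
    (τ : ℝ) (hτ : 0 < τ) (uinit : GridFun M) (hinit : ‖uinit‖ ≤ β) :
    ∀ n : ℕ, ‖(EI1 M h ε κ τ f F σ uinit n).1‖ ≤ β := by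
  intro n
  induction n with
  | zero => exact hinit
  | succ n ih =>
    exact norm_EI1step_fst_le h ε κ τ hτ.le f F σ hσpos (hf.differentiable one_ne_zero)
      hfβ hfβ' hκf ih

/-- MBP of GSAV-EI1: if `f(β) ≤ 0 ≤ f(−β)` and `κ ≥ max_{|ξ|≤β} |f'(ξ)|`, then for any `τ > 0`,
`‖u_init‖_∞ ≤ β` implies `‖uⁿ‖_∞ ≤ β` for every `n ≥ 0` (here `‖·‖` is the sup norm). -/
theorem stmt_7 (M : ℕ) [NeZero M] (L h ε : ℝ) (hL : 0 < L) (hh : h = L / M) (hε : 0 < ε)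
    (f F σ : ℝ → ℝ) (hF : ∀ x, HasDerivAt F (-f x) x)
    (hσ : ContDiff ℝ 1 σ) (hσpos : ∀ x, 0 < σ x) (hσmono : ∀ x, 0 ≤ deriv σ x)
    (κ : ℝ) (hκ : 0 < κ) (hf : ContDiff ℝ 1 f)
    (β : ℝ) (hβ : 0 < β) (hfβ : f β ≤ 0) (hfβ' : 0 ≤ f (-β))
    (hκf : ∀ ξ ∈ Set.Icc (-β) β, |deriv f ξ| ≤ κ)
    (τ : ℝ) (hτ : 0 < τ) (uinit : GridFun M) (hinit : ‖uinit‖ ≤ β) :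
    ∀ n : ℕ, ‖(EI1 M h ε κ τ f F σ uinit n).1‖ ≤ β :=
  stmt_7_general M h ε f F σ hσpos κ hf β hfβ hfβ' hκf τ hτ uinit hinit
end
end
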